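/- arXiv:2406.07271 — 6 statements merged into one kernel-verified Lean document; each statement's English description precedes it below -/
import Mathlib

section
/- For every n ≥ 1, the matrix I + Xₙ Hₙ Xₙᵀ equals (1/s²)·Uₙ·Lₙ, where Xₙ is the n×n lower bidiagonal matrix with 1's on the diagonal and -1's on the subdiagonal, Hₙ = diag(h₁,…,hₙ) with hₖ = (s+1)/s² for k < n and hₙ = 1/s, Uₙ is the n×n upper bidiagonal matrix with (s+1) on the diagonal and -1 on the superdiagonal, and Lₙ is the n×n lower bidiagonal matrix with diagonal entries (s, s+1, …, s+1) and -1 on the subdiagonal. All matrices have entries in the field of rational functions ℝ(s) (or any field containing an element s with s ≠ 0). -/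
set_option synthInstance.maxHeartbeats 400000
set_option maxHeartbeats 2000000

open Matrix

noncomputable def s0 : RatFunc ℝ := RatFunc.X

/-- `Xₙ`: lower bidiagonal, 1 on diagonal, -1 on subdiagonal. -/
noncomputable def Xmat0 (n : ℕ) : Matrix (Fin n) (Fin n) (RatFunc ℝ) :=
  fun i j => if (i : ℕ) = j then 1 else if (i : ℕ) = (j : ℕ) + 1 then -1 else 0

/-- `Hₙ = diag(h₁,…,hₙ)`, `hₖ = (s+1)/s²` for `k < n`, `hₙ = 1/s`. -/
noncomputable def Hmat0 (n : ℕ) : Matrix (Fin n) (Fin n) (RatFunc ℝ) :=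
  Matrix.diagonal (fun k => if (k : ℕ) = n - 1 then s0⁻¹ else (s0 + 1) / s0 ^ 2)

/-- `Uₙ`: upper bidiagonal, `s+1` on diagonal, -1 on superdiagonal. -/
noncomputable def Umat0 (n : ℕ) : Matrix (Fin n) (Fin n) (RatFunc ℝ) :=
  fun i j => if (i : ℕ) = j then s0 + 1 else if (j : ℕ) = (i : ℕ) + 1 then -1 else 0

/-- `Lₙ`: lower bidiagonal, diagonal `(s, s+1, …, s+1)`, -1 on subdiagonal. -/
noncomputable def Lmat0 (n : ℕ) : Matrix (Fin n) (Fin n) (RatFunc ℝ) :=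
  fun i j => if (i : ℕ) = j then (if (i : ℕ) = 0 then s0 else s0 + 1)
    else if (i : ℕ) = (j : ℕ) + 1 then -1 else 0

private lemma sum_delta {n : ℕ} (i : Fin n) (f : Fin n → RatFunc ℝ) :
    ∑ k : Fin n, (if (i : ℕ) = (k : ℕ) then f k else 0) = f i := by
  rw [Finset.sum_eq_single i]
  · simp
  · intro b _ hb
    rw [if_neg fun h => hb (Fin.ext h.symm)]
  · simp

private lemma sum_pred {n : ℕ} (i : Fin n) (f : Fin n → RatFunc ℝ) :
    ∑ k : Fin n, (if (i : ℕ) = (k : ℕ) + 1 then f k else 0)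
      = if h : 0 < (i : ℕ) then
          f ⟨(i : ℕ) - 1, Nat.lt_of_le_of_lt (Nat.sub_le _ _) i.isLt⟩ else 0 := by
  split_ifs with h
  · rw [Finset.sum_eq_single ⟨(i : ℕ) - 1, Nat.lt_of_le_of_lt (Nat.sub_le _ _) i.isLt⟩]
    · rw [if_pos]; · simp; omega
    · intro b _ hb
      rw [if_neg]
      intro hc
      exact hb (Fin.ext (by simp; omega))
    · simp
  · apply Finset.sum_eq_zero
    intro k _
    rw [if_neg]; omega
  
private lemma sum_succ {n : ℕ} (i : Fin n) (f : Fin n → RatFunc ℝ) :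
    ∑ k : Fin n, (if (k : ℕ) = (i : ℕ) + 1 then f k else 0)
      = if h : (i : ℕ) + 1 < n then f ⟨(i : ℕ) + 1, h⟩ else 0 := by
  split_ifs with h
  · rw [Finset.sum_eq_single ⟨(i : ℕ) + 1, h⟩]
    · rw [if_pos rfl]
    · intro b _ hb
      rw [if_neg]
      intro hc
      exact hb (Fin.ext hc)
    · simp
  · apply Finset.sum_eq_zero
    intro k _
    rw [if_neg]
    have := k.isLt
    omega

theorem ul_factorisation (n : ℕ) (hn : 1 ≤ n) :
    (1 : Matrix (Fin n) (Fin n) (RatFunc ℝ)) + Xmat0 n * Hmat0 n * (Xmat0 n)ᵀ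
      = (s0 ^ 2)⁻¹ • (Umat0 n * Lmat0 n) := by
  have hs : s0 ≠ 0 := RatFunc.X_ne_zero
  set d : Fin n → RatFunc ℝ :=
    fun k => if (k : ℕ) = n - 1 then s0⁻¹ else (s0 + 1) / s0 ^ 2 with hd
  ext i j
  have hXH : ∀ k, (Xmat0 n * Hmat0 n) i k = Xmat0 n i k * d k := by
    intro k
    rw [Hmat0, Matrix.mul_diagonal]
  have hLHS : (Xmat0 n * Hmat0 n * (Xmat0 n)ᵀ) i j
      = d i * Xmat0 n j i
        + (if h : 0 < (i : ℕ) then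
            -(d ⟨(i : ℕ) - 1, Nat.lt_of_le_of_lt (Nat.sub_le _ _) i.isLt⟩
              * Xmat0 n j ⟨(i : ℕ) - 1, Nat.lt_of_le_of_lt (Nat.sub_le _ _) i.isLt⟩)
          else 0) := by
    rw [Matrix.mul_apply]
    have : ∀ k, (Xmat0 n * Hmat0 n) i k * (Xmat0 n)ᵀ k j
        = (if (i : ℕ) = (k : ℕ) then d k * Xmat0 n j k else 0)
          + (if (i : ℕ) = (k : ℕ) + 1 then -(d k * Xmat0 n j k) else 0) := by
      intro k
      rw [hXH, Matrix.transpose_apply]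
      show (if (i : ℕ) = (k : ℕ) then (1:RatFunc ℝ)
          else if (i : ℕ) = (k : ℕ) + 1 then -1 else 0) * d k * Xmat0 n j k = _
      split_ifs with h1 h2
      · omega
      · ring
      · ring
      · ring
    rw [Finset.sum_congr rfl fun k _ => this k, Finset.sum_add_distrib,
      sum_delta, sum_pred]
  have hRHS : (Umat0 n * Lmat0 n) i j
      = (s0 + 1) * Lmat0 n i j
        + (if h : (i : ℕ) + 1 < n then -(Lmat0 n ⟨(i : ℕ) + 1, h⟩ j) else 0) := by
    rw [Matrix.mul_apply]
    have : ∀ k, Umat0 n i k * Lmat0 n k j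
        = (if (i : ℕ) = (k : ℕ) then (s0 + 1) * Lmat0 n k j else 0)
          + (if (k : ℕ) = (i : ℕ) + 1 then -(Lmat0 n k j) else 0) := by
      intro k
      show (if (i : ℕ) = (k : ℕ) then s0 + 1
          else if (k : ℕ) = (i : ℕ) + 1 then -1 else 0) * Lmat0 n k j = _
      split_ifs with h1 h2
      · omega
      · ring
      · ring
      · ring
    rw [Finset.sum_congr rfl fun k _ => this k, Finset.sum_add_distrib]
    have e1 : ∑ k : Fin n, (if (i : ℕ) = (k : ℕ) then (s0 + 1) * Lmat0 n k j else 0)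
        = (s0 + 1) * Lmat0 n i j := sum_delta i _
    rw [e1, sum_succ]
  rw [Matrix.add_apply, Matrix.smul_apply, hLHS, hRHS, Matrix.one_apply, smul_eq_mul]
  have hi := i.isLt
  have hj := j.isLt
  simp only [Xmat0, Lmat0, hd, Fin.ext_iff]
  have hs2 : s0 ^ 2 ≠ 0 := pow_ne_zero _ hs
  split_ifs <;> first
    | omega
    | exact (‹False›).elim
    | (field_simp; try ring)
end

section
/- Let A be an (n+m)×(n+m) invertible matrix over a field that factors as A = P·Q, where P has block form [[Ū, B],[0, D]] with Ū an n×n upper triangular invertible matrix, and Q has block form [[L̄, 0],[C, E]] with L̄ an n×n lower triangular invertible matrix. Then the top-left n×n block of A⁻¹ equals L̄⁻¹·Ū⁻¹. In particular, this block depends only on Ū and L̄, not on B, C, D, E. -/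
set_option synthInstance.maxHeartbeats 400000
set_option maxHeartbeats 1000000

open Matrix

theorem block_inverse_topleft {K : Type*} [Field K] {n m : ℕ}
    (Ubar : Matrix (Fin n) (Fin n) K) (B : Matrix (Fin n) (Fin m) K)
    (D : Matrix (Fin m) (Fin m) K)
    (Lbar : Matrix (Fin n) (Fin n) K) (C : Matrix (Fin m) (Fin n) K)
    (E : Matrix (Fin m) (Fin m) K)
    (A : Matrix (Fin n ⊕ Fin m) (Fin n ⊕ Fin m) K)
    (hU_tri : ∀ i j : Fin n, j < i → Ubar i j = 0)
    (hL_tri : ∀ i j : Fin n, i < j → Lbar i j = 0)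
    (hU : IsUnit Ubar.det) (hL : IsUnit Lbar.det)
    (hA : A = Matrix.fromBlocks Ubar B 0 D * Matrix.fromBlocks Lbar 0 C E)
    (hAinv : IsUnit A.det) :
    (A⁻¹).toBlocks₁₁ = Lbar⁻¹ * Ubar⁻¹ := by
  have hdet : A.det = (Ubar.det * D.det) * (Lbar.det * E.det) := by
    rw [hA, det_mul, det_fromBlocks_zero₂₁, det_fromBlocks_zero₁₂]
  rw [hdet] at hAinv
  have hD : IsUnit D.det := (IsUnit.mul_iff.1 (IsUnit.mul_iff.1 hAinv).1).2
  have hE : IsUnit E.det := (IsUnit.mul_iff.1 (IsUnit.mul_iff.1 hAinv).2).2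
  have hPinv : (fromBlocks Ubar B 0 D)⁻¹ = fromBlocks Ubar⁻¹ (-(Ubar⁻¹ * B * D⁻¹)) 0 D⁻¹ :=
    inv_fromBlocks_zero₂₁_of_isUnit_iff _ _ _
      (iff_of_true ((Matrix.isUnit_iff_isUnit_det _).2 hU) ((Matrix.isUnit_iff_isUnit_det _).2 hD))
  have hQinv : (fromBlocks Lbar 0 C E)⁻¹ = fromBlocks Lbar⁻¹ 0 (-(E⁻¹ * C * Lbar⁻¹)) E⁻¹ :=
    inv_fromBlocks_zero₁₂_of_isUnit_iff _ _ _
      (iff_of_true ((Matrix.isUnit_iff_isUnit_det _).2 hL) ((Matrix.isUnit_iff_isUnit_det _).2 hE))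
  rw [hA, Matrix.mul_inv_rev, hPinv, hQinv, fromBlocks_multiply]
  simp [toBlocks₁₁]
  rfl
end

section
/- With Xₙ and Hₙ as in the UL-factorization lemma (hₖ = (s+1)/s² for k < n, hₙ = 1/s), the matrix Sₙ = (I + Xₙ Hₙ Xₙᵀ)⁻¹ exists over ℝ(s), and its (1,1) entry equals s/(s+1), independently of n ≥ 1. -/
set_option synthInstance.maxHeartbeats 400000
set_option maxHeartbeats 1600000

open Matrix

noncomputable def s2 : RatFunc ℝ := RatFunc.X

noncomputable def Xmat2 (n : ℕ) : Matrix (Fin n) (Fin n) (RatFunc ℝ) :=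
  fun i j => if (i : ℕ) = j then 1 else if (i : ℕ) = (j : ℕ) + 1 then -1 else 0

noncomputable def Hmat2 (n : ℕ) : Matrix (Fin n) (Fin n) (RatFunc ℝ) :=
  Matrix.diagonal (fun k => if (k : ℕ) = n - 1 then s2⁻¹ else (s2 + 1) / s2 ^ 2)

noncomputable def Smat (n : ℕ) : Matrix (Fin n) (Fin n) (RatFunc ℝ) :=
  fun i j => if (i : ℕ) = (j : ℕ) + 1 then 1 else 0

noncomputable def eV (n : ℕ) : Fin n → RatFunc ℝ := fun k => if (k : ℕ) = n - 1 then 1 else 0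
noncomputable def fV (n : ℕ) : Fin n → RatFunc ℝ := fun k => if (k : ℕ) = 0 then 1 else 0

lemma SE (n : ℕ) : Smat n * Matrix.diagonal (eV n) = 0 := by
  ext i j
  rw [Matrix.mul_diagonal]
  simp only [Smat, eV, Matrix.zero_apply]
  split_ifs with h1 h2 <;> simp_all <;> omega

lemma ES (n : ℕ) : Matrix.diagonal (eV n) * (Smat n)ᵀ = 0 := by
  ext i j
  rw [Matrix.diagonal_mul]
  simp only [Smat, eV, Matrix.transpose_apply, Matrix.zero_apply]
  split_ifs with h1 h2 <;> simp_all <;> omega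

lemma FS (n : ℕ) : Matrix.diagonal (fV n) * Smat n = 0 := by
  ext i j
  rw [Matrix.diagonal_mul]
  simp only [Smat, fV, Matrix.zero_apply]
  split_ifs with h1 h2 <;> simp_all <;> omega

lemma SF (n : ℕ) : (Smat n)ᵀ * Matrix.diagonal (fV n) = 0 := by
  ext i j
  rw [Matrix.mul_diagonal]
  simp only [Smat, fV, Matrix.transpose_apply, Matrix.zero_apply]
  split_ifs with h1 h2 <;> simp_all <;> omega

lemma SST (n : ℕ) : Smat n * (Smat n)ᵀ = 1 - Matrix.diagonal (fV n) := by
  ext i j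
  rw [Matrix.mul_apply]
  simp only [Smat, Matrix.transpose_apply, Matrix.sub_apply, Matrix.one_apply,
    Matrix.diagonal_apply, fV, ite_mul, one_mul, zero_mul]
  by_cases hij : i = j
  · subst hij
    by_cases hi : (i : ℕ) = 0
    · rw [Finset.sum_eq_zero]
      · simp [hi]
      · intro k _
        split_ifs with h
        · exfalso; omega
        · rfl
    · have hlt : (i : ℕ) - 1 < n := by omega
      rw [Finset.sum_eq_single ⟨(i : ℕ) - 1, hlt⟩]
      · have hc : (i : ℕ) = (i : ℕ) - 1 + 1 := by omega
        simp only [Fin.val_mk]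
        rw [if_pos hc, if_pos hc]
        simp [hi]
      · intro k _ hk
        rw [if_neg]
        intro h
        exact hk (Fin.ext (by simp only [Fin.val_mk]; omega))
      · intro h; exact absurd (Finset.mem_univ _) h
  · rw [Finset.sum_eq_zero]
    · simp [hij]
    · intro k _
      split_ifs with h1 h2
      · exact absurd (Fin.ext (show (i:ℕ) = j by omega)) hij
      · rfl
      · rfl

lemma STS (n : ℕ) : (Smat n)ᵀ * Smat n = 1 - Matrix.diagonal (eV n) := by
  ext i j
  rw [Matrix.mul_apply]
  simp only [Smat, Matrix.transpose_apply, Matrix.sub_apply, Matrix.one_apply,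
    Matrix.diagonal_apply, eV, ite_mul, one_mul, zero_mul]
  by_cases hij : i = j
  · subst hij
    by_cases hi : (i : ℕ) = n - 1
    · rw [Finset.sum_eq_zero]
      · simp [hi]
      · intro k _
        split_ifs with h
        · exfalso; omega
        · rfl
    · have hlt : (i : ℕ) + 1 < n := by omega
      rw [Finset.sum_eq_single ⟨(i : ℕ) + 1, hlt⟩]
      · simp only [Fin.val_mk]
        simp [hi]
      · intro k _ hk
        rw [if_neg]
        intro h
        exact hk (Fin.ext (by simp only [Fin.val_mk]; omega))
      · intro h; exact absurd (Finset.mem_univ _) h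
  · rw [Finset.sum_eq_zero]
    · simp [hij]
    · intro k _
      split_ifs with h1 h2
      · exact absurd (Fin.ext (show (i:ℕ) = j by omega)) hij
      · rfl
      · rfl

lemma s2_ne : s2 ≠ 0 := RatFunc.X_ne_zero
lemma s21_ne : s2 + 1 ≠ 0 := by
  have h : s2 + 1 = algebraMap (Polynomial ℝ) (RatFunc ℝ) (Polynomial.X + Polynomial.C 1) := by
    simp [s2, map_add, RatFunc.algebraMap_X]
  rw [h]
  exact RatFunc.algebraMap_ne_zero (Polynomial.X_add_C_ne_zero 1)

noncomputable def Umat (n : ℕ) : Matrix (Fin n) (Fin n) (RatFunc ℝ) :=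
  1 + (-(s2 + 1)⁻¹) • (Smat n)ᵀ

noncomputable def Dmat (n : ℕ) : Matrix (Fin n) (Fin n) (RatFunc ℝ) :=
  Matrix.diagonal (fun k => if (k : ℕ) = 0 then (s2 + 1) / s2 else (s2 + 1) ^ 2 / s2 ^ 2)

lemma Xdecomp (n : ℕ) : Xmat2 n = 1 - Smat n := by
  ext i j
  simp only [Xmat2, Smat, Matrix.sub_apply, Matrix.one_apply]
  by_cases h1 : (i : ℕ) = j
  · have hij : i = j := Fin.ext h1
    subst hij
    rw [if_pos rfl, if_pos rfl, if_neg (by omega)]; ring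
  · rw [if_neg h1, if_neg (fun h => h1 (congrArg Fin.val h))]
    by_cases h2 : (i : ℕ) = (j : ℕ) + 1
    · rw [if_pos h2, if_pos h2]; ring
    · rw [if_neg h2, if_neg h2]; ring

lemma Hdecomp (n : ℕ) : Hmat2 n = ((s2 + 1) / s2 ^ 2) • (1 : Matrix (Fin n) (Fin n) (RatFunc ℝ))
    + (s2⁻¹ - (s2 + 1) / s2 ^ 2) • Matrix.diagonal (eV n) := by
  ext i j
  simp only [Hmat2, eV, Matrix.add_apply, Matrix.smul_apply, Matrix.one_apply,
    Matrix.diagonal_apply, smul_eq_mul]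
  by_cases h : i = j
  · subst h
    by_cases h2 : (i : ℕ) = n - 1 <;> simp [h2] <;> ring
  · simp [h, Ne.symm h]

lemma Ddecomp (n : ℕ) : Dmat n = ((s2 + 1) ^ 2 / s2 ^ 2) • (1 : Matrix (Fin n) (Fin n) (RatFunc ℝ))
    + ((s2 + 1) / s2 - (s2 + 1) ^ 2 / s2 ^ 2) • Matrix.diagonal (fV n) := by
  ext i j
  simp only [Dmat, fV, Matrix.add_apply, Matrix.smul_apply, Matrix.one_apply,
    Matrix.diagonal_apply, smul_eq_mul]
  by_cases h : i = j
  · subst h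
    by_cases h2 : (i : ℕ) = 0 <;> simp [h2] <;> ring
  · simp [h, Ne.symm h]

lemma factor (n : ℕ) :
    (1 : Matrix (Fin n) (Fin n) (RatFunc ℝ)) + Xmat2 n * Hmat2 n * (Xmat2 n)ᵀ
      = Umat n * Dmat n * (Umat n)ᵀ := by
  have hs := s2_ne
  have hs1 := s21_ne
  rw [Xdecomp, Hdecomp, Ddecomp]
  simp only [Umat, Matrix.transpose_add, Matrix.transpose_sub, Matrix.transpose_one,
    Matrix.transpose_smul, Matrix.transpose_transpose]
  simp only [mul_add, add_mul, mul_sub, sub_mul, Matrix.mul_smul, Matrix.smul_mul,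
    mul_one, one_mul, mul_assoc]
  simp only [SE, ES, FS, SF, SST, STS, Matrix.mul_zero, Matrix.zero_mul, smul_zero,
    Matrix.mul_one, Matrix.one_mul, mul_sub, Matrix.mul_sub, Matrix.sub_mul, smul_sub]
  ext i j
  simp only [Matrix.add_apply, Matrix.sub_apply, Matrix.smul_apply, Matrix.one_apply,
    Matrix.diagonal_apply, Matrix.transpose_apply, Matrix.zero_apply, Smat, eV, fV,
    smul_eq_mul, Fin.ext_iff]
  split_ifs <;> first | omega | (simp only [inv_eq_one_div]; field_simp [hs, hs1]; try ring)

lemma Udet (n : ℕ) : (Umat n).det = 1 := by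
  rw [Matrix.det_of_upperTriangular]
  · apply Finset.prod_eq_one
    intro i _
    simp only [Umat, Smat, Matrix.add_apply, Matrix.one_apply_eq, Matrix.smul_apply,
      Matrix.transpose_apply, smul_eq_mul]
    rw [if_neg (by omega)]
    ring
  · intro i j hji
    simp only [id] at hji
    simp only [Umat, Smat, Matrix.add_apply, Matrix.smul_apply, Matrix.transpose_apply,
      smul_eq_mul]
    rw [Matrix.one_apply_ne (by intro h; subst h; exact absurd hji (lt_irrefl _)),
      if_neg (by omega)]
    ring

lemma Ddet_ne (n : ℕ) : (Dmat n).det ≠ 0 := by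
  rw [Dmat, Matrix.det_diagonal]
  rw [Finset.prod_ne_zero_iff]
  intro k _
  split_ifs
  · exact div_ne_zero s21_ne s2_ne
  · exact div_ne_zero (pow_ne_zero 2 s21_ne) (pow_ne_zero 2 s2_ne)

lemma Dinv (n : ℕ) : (Dmat n)⁻¹
    = Matrix.diagonal (fun k : Fin n => if (k : ℕ) = 0 then s2 / (s2 + 1) else s2 ^ 2 / (s2 + 1) ^ 2) := by
  apply Matrix.inv_eq_right_inv
  rw [Dmat, Matrix.diagonal_mul_diagonal]
  have h : (fun k : Fin n => (if (k : ℕ) = 0 then (s2 + 1) / s2 else (s2 + 1) ^ 2 / s2 ^ 2)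
      * (if (k : ℕ) = 0 then s2 / (s2 + 1) else s2 ^ 2 / (s2 + 1) ^ 2)) = fun _ => (1 : RatFunc ℝ) := by
    funext k
    split_ifs
    · rw [div_mul_div_comm, div_eq_one_iff_eq (mul_ne_zero s2_ne s21_ne)]; ring
    · rw [div_mul_div_comm,
        div_eq_one_iff_eq (mul_ne_zero (pow_ne_zero 2 s2_ne) (pow_ne_zero 2 s21_ne))]; ring
  rw [h, Matrix.diagonal_one]

theorem sensitivity_topleft_entry (n : ℕ) (hn : 1 ≤ n) :
    IsUnit ((1 : Matrix (Fin n) (Fin n) (RatFunc ℝ)) + Xmat2 n * Hmat2 n * (Xmat2 n)ᵀ).det ∧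
    ((1 : Matrix (Fin n) (Fin n) (RatFunc ℝ)) + Xmat2 n * Hmat2 n * (Xmat2 n)ᵀ)⁻¹
        ⟨0, hn⟩ ⟨0, hn⟩ = s2 / (s2 + 1) := by
  set z : Fin n := ⟨0, hn⟩ with hz
  have hfac := factor n
  have hUdet : IsUnit (Umat n).det := by rw [Udet]; exact isUnit_one
  have hDunit : IsUnit (Dmat n).det := Ne.isUnit (Ddet_ne n)
  have hUcol : ∀ j : Fin n, Umat n j z = (1 : Matrix (Fin n) (Fin n) (RatFunc ℝ)) j z := by
    intro j
    simp only [Umat, Smat, Matrix.add_apply, Matrix.smul_apply, Matrix.transpose_apply,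
      smul_eq_mul]
    rw [if_neg (by simp [hz])]
    ring
  have hcol : ∀ k : Fin n, (Umat n)⁻¹ k z = (1 : Matrix (Fin n) (Fin n) (RatFunc ℝ)) k z := by
    intro k
    have h1 := Matrix.nonsing_inv_mul (Umat n) hUdet
    have h2 : ((Umat n)⁻¹ * Umat n) k z
        = ((Umat n)⁻¹ * (1 : Matrix (Fin n) (Fin n) (RatFunc ℝ))) k z := by
      rw [Matrix.mul_apply, Matrix.mul_apply]
      exact Finset.sum_congr rfl fun j _ => by rw [hUcol]
    rw [h1, Matrix.mul_one] at h2
    exact h2.symm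
  constructor
  · rw [hfac, Matrix.det_mul, Matrix.det_mul, Udet, Matrix.det_transpose, Udet, one_mul, mul_one]
    exact hDunit
  · rw [hfac, Matrix.mul_inv_rev, Matrix.mul_inv_rev, ← Matrix.transpose_nonsing_inv]
    rw [Matrix.mul_apply]
    rw [Finset.sum_eq_single z]
    · rw [Matrix.transpose_apply, hcol z, Matrix.one_apply_eq, one_mul]
      rw [Matrix.mul_apply, Finset.sum_eq_single z]
      · rw [hcol z, Matrix.one_apply_eq, mul_one, Dinv, Matrix.diagonal_apply_eq]
        rw [if_pos rfl]
      · intro k _ hk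
        rw [hcol k, Matrix.one_apply_ne hk, mul_zero]
      · intro h; exact absurd (Finset.mem_univ _) h
    · intro j _ hj
      rw [Matrix.transpose_apply, hcol j, Matrix.one_apply_ne hj, zero_mul]
    · intro h; exact absurd (Finset.mem_univ _) h
end

section
/- Let m ≥ 1 and define f(s) = (Σ_{k=0}^{m-1} C(2m,k) s^k)/(1+s)^{2m} as a formal power series in s. Then f(0) = 1, the coefficients of s¹ through s^{m-1} in the power-series expansion of f all vanish, and the coefficient of s^m is -C(2m,m). -/
/-!
The numerator is the truncation below degree `m` of `u = (1 + s) ^ (2m)`, so writing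
`u = trunc m u + s ^ m ψ` gives `f = 1 - s ^ m ψ / u`. Hence `f ≡ 1` modulo `s ^ m`, and the
coefficient of `s ^ m` is `-ψ(0) / u(0) = -C(2m, m)`.
-/

set_option synthInstance.maxHeartbeats 400000

open PowerSeries Finset

/-- `f = (Σ_{k<m} C(2m,k) s^k) · (1+s)^{-2m}` as a formal power series over ℝ. -/
noncomputable def f7 (m : ℕ) : PowerSeries ℝ :=
  (∑ k ∈ Finset.range m, (Nat.choose (2 * m) k : PowerSeries ℝ) * (PowerSeries.X : PowerSeries ℝ) ^ k) *
    ((1 + (PowerSeries.X : PowerSeries ℝ)) ^ (2 * m))⁻¹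

namespace PowerSeries

open scoped Polynomial

section Semiring

variable {R : Type*} [CommSemiring R]

theorem coeff_one_add_X_pow (n d : ℕ) : coeff d ((1 + X : R⟦X⟧) ^ n) = n.choose d := by
  have hcoe : (1 + X : R⟦X⟧) ^ n = ((1 + Polynomial.X : R[X]) ^ n : R[X]) := by simp
  rw [hcoe, Polynomial.coeff_coe, Polynomial.coeff_one_add_X_pow]

theorem trunc_one_add_X_pow (n m : ℕ) :
    (trunc m ((1 + X : R⟦X⟧) ^ n) : R⟦X⟧) = ∑ k ∈ range m, (n.choose k : R⟦X⟧) * X ^ k := by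
  ext d
  simp only [Polynomial.coeff_coe, coeff_trunc, coeff_one_add_X_pow, map_sum,
    ← map_natCast (C (R := R)), coeff_C_mul_X_pow, sum_ite_eq, mem_range]

end Semiring

section Field

variable {k : Type*} [Field k] {φ : k⟦X⟧}

theorem trunc_mul_inv (hφ : constantCoeff φ ≠ 0) (n : ℕ) :
    (trunc n φ : k⟦X⟧) * φ⁻¹ = 1 - X ^ n * ((mk fun i ↦ coeff (i + n) φ) * φ⁻¹) := by
  conv_lhs => rw [eq_sub_of_add_eq' (eq_X_pow_mul_shift_add_trunc n φ).symm]
  rw [sub_mul, PowerSeries.mul_inv_cancel φ hφ, mul_assoc]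

theorem coeff_trunc_mul_inv_of_lt (hφ : constantCoeff φ ≠ 0) {n d : ℕ} (hd : d < n) :
    coeff d ((trunc n φ : k⟦X⟧) * φ⁻¹) = coeff d (1 : k⟦X⟧) := by
  rw [trunc_mul_inv hφ, map_sub, coeff_X_pow_mul', if_neg (not_le.mpr hd), sub_zero]

theorem coeff_trunc_mul_inv_self (hφ : constantCoeff φ ≠ 0) (n : ℕ) :
    coeff n ((trunc n φ : k⟦X⟧) * φ⁻¹) = coeff n (1 : k⟦X⟧) - coeff n φ / constantCoeff φ := by
  rw [trunc_mul_inv hφ, map_sub, coeff_X_pow_mul', if_pos le_rfl, Nat.sub_self,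
    coeff_zero_eq_constantCoeff, map_mul, constantCoeff_inv, constantCoeff_mk, zero_add,
    div_eq_mul_inv]

end Field

end PowerSeries

theorem maclaurin_NX (m : ℕ) (hm : 1 ≤ m) :
    PowerSeries.coeff 0 (f7 m) = 1 ∧
    (∀ k : ℕ, 1 ≤ k → k ≤ m - 1 → PowerSeries.coeff k (f7 m) = 0) ∧
    PowerSeries.coeff m (f7 m) = -(Nat.choose (2 * m) m : ℝ) := by
  have hf : f7 m = (trunc m ((1 + X : ℝ⟦X⟧) ^ (2 * m)) : ℝ⟦X⟧) * ((1 + X) ^ (2 * m))⁻¹ := by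
    rw [f7, trunc_one_add_X_pow]
  have hunit : constantCoeff ((1 + X : ℝ⟦X⟧) ^ (2 * m)) = 1 := by simp
  have hunit' : constantCoeff ((1 + X : ℝ⟦X⟧) ^ (2 * m)) ≠ 0 := hunit ▸ one_ne_zero
  refine ⟨?_, fun k hk1 hkm ↦ ?_, ?_⟩
  · rw [hf, coeff_trunc_mul_inv_of_lt hunit' hm, coeff_one, if_pos rfl]
  · rw [hf, coeff_trunc_mul_inv_of_lt hunit' (by omega), coeff_one, if_neg (by omega)]
  · rw [hf, coeff_trunc_mul_inv_self hunit', coeff_one, if_neg (by omega), hunit,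
      coeff_one_add_X_pow, div_one, zero_sub]
end

section
/- Order-lifting of controllers: let ℓ ≥ m ≥ 1 and suppose c̄ internally stabilises s^{-ℓ}. Define c(s) = s^{-ℓ+m}·c̄(s). Then c internally stabilises s^{-m}, and moreover s^{-m}c/(1 + s^{-m}c) = s^{-ℓ}c̄/(1 + s^{-ℓ}c̄) as rational functions, so the closed-loop complementary sensitivity is unchanged. -/
/-! Writing `L = s^{-ℓ} c̄` for the loop gain of the given design, the lifted controller gives
`s^{-m} · s^{-(ℓ-m)} c̄ = L`, so the sensitivity `1/(1+L)` and the complementary sensitivity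
`L/(1+L)` are unchanged. The two remaining closed-loop maps are `s^{-n} g` with `n ≤ ℓ`, where
`g` and `s^{-ℓ} g` are stable closed-loop maps of the original design (`g = 1/(1+L)` for the plant,
`g = c̄/(1+L)` for the controller). Such an `s^{-n} g` is proper because `g` is and `n ≥ 0`, and has
no more poles than `s^{-ℓ} g`, of which it is the polynomial multiple `s^{ℓ-n} · s^{-ℓ} g`. -/

set_option synthInstance.maxHeartbeats 400000

noncomputable def s14 : RatFunc ℝ := RatFunc.X

/-- `f ∈ RH∞`: proper, and no poles in the closed right half-plane. -/
def Stable14 (f : RatFunc ℝ) : Prop :=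
  f.num.degree ≤ f.denom.degree ∧
    ∀ z : ℂ, 0 ≤ z.re → Polynomial.eval z (f.denom.map (algebraMap ℝ ℂ)) ≠ 0

/-- `c` internally stabilises `p`. -/
def Stabilises14 (p c : RatFunc ℝ) : Prop :=
  1 + p * c ≠ 0 ∧ Stable14 (1 / (1 + p * c)) ∧ Stable14 (p / (1 + p * c)) ∧
    Stable14 (c / (1 + p * c)) ∧ Stable14 (p * c / (1 + p * c))

namespace RatFunc

variable {K : Type*} [Field K]

theorem num_degree_le_denom_degree_iff {f : RatFunc K} (hf : f ≠ 0) :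
    f.num.degree ≤ f.denom.degree ↔ f.intDegree ≤ 0 := by
  rw [Polynomial.degree_eq_natDegree (num_ne_zero hf),
    Polynomial.degree_eq_natDegree f.denom_ne_zero, intDegree, sub_nonpos, Nat.cast_le,
    Int.ofNat_le]

theorem intDegree_X_pow (n : ℕ) : (X ^ n : RatFunc K).intDegree = n := by
  rw [← algebraMap_X, ← map_pow, intDegree_polynomial, Polynomial.natDegree_X_pow]

theorem num_degree_le_denom_degree_inv_X_pow_mul {f : RatFunc K} (n : ℕ)
    (hf : f.num.degree ≤ f.denom.degree) :
    ((X ^ n)⁻¹ * f).num.degree ≤ ((X ^ n)⁻¹ * f).denom.degree := by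
  rcases eq_or_ne f 0 with rfl | hf0
  · simp
  have hXn : (X ^ n : RatFunc K)⁻¹ ≠ 0 := inv_ne_zero (pow_ne_zero n X_ne_zero)
  rw [num_degree_le_denom_degree_iff (mul_ne_zero hXn hf0), intDegree_mul hXn hf0,
    intDegree_inv, intDegree_X_pow]
  have := (num_degree_le_denom_degree_iff hf0).mp hf
  omega

theorem denom_algebraMap_mul_dvd (p : Polynomial K) (f : RatFunc K) :
    (algebraMap (Polynomial K) (RatFunc K) p * f).denom ∣ f.denom := by
  simpa [denom_algebraMap] using denom_mul_dvd (algebraMap (Polynomial K) (RatFunc K) p) f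

end RatFunc

theorem Stable14.inv_pow_mul {g : RatFunc ℝ} {n ℓ : ℕ} (hnℓ : n ≤ ℓ) (hg : Stable14 g)
    (hℓ : Stable14 ((s14 ^ ℓ)⁻¹ * g)) : Stable14 ((s14 ^ n)⁻¹ * g) := by
  refine ⟨RatFunc.num_degree_le_denom_degree_inv_X_pow_mul n hg.1, ?_⟩
  have hmul : (s14 ^ n)⁻¹ * g =
      algebraMap (Polynomial ℝ) (RatFunc ℝ) (Polynomial.X ^ (ℓ - n)) * ((s14 ^ ℓ)⁻¹ * g) := by
    have hs : s14 ^ ℓ ≠ 0 := pow_ne_zero ℓ RatFunc.X_ne_zero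
    rw [map_pow, RatFunc.algebraMap_X, ← s14, ← mul_assoc, pow_sub₀ s14 RatFunc.X_ne_zero hnℓ,
      mul_right_comm (s14 ^ ℓ), mul_inv_cancel₀ hs, one_mul]
  have hdvd := Polynomial.map_dvd (algebraMap ℝ ℂ)
    (hmul ▸ RatFunc.denom_algebraMap_mul_dvd _ ((s14 ^ ℓ)⁻¹ * g))
  intro z hz hzero
  exact hℓ.2 z hz (eq_zero_of_zero_dvd (hzero ▸ Polynomial.eval_dvd hdvd))

theorem order_lifting_general (ℓ m : ℕ) (hml : m ≤ ℓ) (cbar : RatFunc ℝ)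
    (hstab : Stabilises14 ((s14 ^ ℓ)⁻¹) cbar) :
    Stabilises14 ((s14 ^ m)⁻¹) ((s14 ^ (ℓ - m))⁻¹ * cbar) ∧
    (s14 ^ m)⁻¹ * ((s14 ^ (ℓ - m))⁻¹ * cbar) /
        (1 + (s14 ^ m)⁻¹ * ((s14 ^ (ℓ - m))⁻¹ * cbar))
      = (s14 ^ ℓ)⁻¹ * cbar / (1 + (s14 ^ ℓ)⁻¹ * cbar) := by
  have loop_gain : (s14 ^ m)⁻¹ * ((s14 ^ (ℓ - m))⁻¹ * cbar) = (s14 ^ ℓ)⁻¹ * cbar := by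
    rw [← mul_assoc, ← mul_inv, ← pow_add, Nat.add_sub_cancel' hml]
  refine ⟨?_, by rw [loop_gain]⟩
  obtain ⟨hD, hS, hPS, hCS, hT⟩ := hstab
  rw [Stabilises14, loop_gain]
  refine ⟨hD, hS, ?_, ?_, hT⟩
  · rw [← mul_one_div]
    exact hS.inv_pow_mul hml (by rwa [mul_one_div])
  · rw [mul_div_assoc]
    exact hCS.inv_pow_mul (Nat.sub_le ℓ m) (by rwa [← mul_div_assoc])

theorem order_lifting (ℓ m : ℕ) (hm : 1 ≤ m) (hml : m ≤ ℓ) (cbar : RatFunc ℝ)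
    (hstab : Stabilises14 ((s14 ^ ℓ)⁻¹) cbar) :
    Stabilises14 ((s14 ^ m)⁻¹) ((s14 ^ (ℓ - m))⁻¹ * cbar) ∧
    (s14 ^ m)⁻¹ * ((s14 ^ (ℓ - m))⁻¹ * cbar) /
        (1 + (s14 ^ m)⁻¹ * ((s14 ^ (ℓ - m))⁻¹ * cbar))
      = (s14 ^ ℓ)⁻¹ * cbar / (1 + (s14 ^ ℓ)⁻¹ * cbar) :=
  order_lifting_general ℓ m hml cbar hstab
end

section
/- Non-overlapping peak construction: let T: ℝ → ℝ≥0 be a function, let 0 < ω̲ < ω̄, and suppose T(ω) ≤ 1+ε for ω̲ < |ω| < ω̄ and T(ω) ≤ 1 otherwise. Define γ_k = (ω̄/ω̲)^{k-1}·γ₁ for some γ₁ > 0, and Tₖ(ω) = T(γₖ ω). Then for every n ∈ ℕ and every ω ∈ ℝ, the product Π_{k=1}^n Tₖ(ω) ≤ 1+ε, because for each ω at most one factor exceeds 1 (the intervals (ω̲/γₖ, ω̄/γₖ) are pairwise disjoint since ω̄/γ_{k+1} = ω̲/γₖ). -/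
/-!
Put `r = ω̄ / ω̲`. Multiplication by `r` sends the lower edge `ω̲` of the band `ω̲ < |x| < ω̄`
to its upper edge, so the band and its images under `x ↦ r ^ m * x`, `m ≥ 1`, are pairwise
disjoint. Hence for fixed `ω` at most one factor `T (r ^ (k - 1) * γ₁ * ω)` exceeds `1`; it is
at most `1 + ε`, and all other factors are at most `1`.
-/

open Finset

theorem Finset.prod_le_of_forall_le_of_subsingleton_one_lt {ι R : Type*} [CommSemiring R]
    [LinearOrder R] [IsStrictOrderedRing R] {s : Finset ι} {f : ι → R} {c : R}
    (h0 : ∀ i ∈ s, 0 ≤ f i) (hc : ∀ i ∈ s, f i ≤ c) (h1c : 1 ≤ c)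
    (hs : {i | i ∈ s ∧ 1 < f i}.Subsingleton) :
    ∏ i ∈ s, f i ≤ c := by
  classical
  by_cases h : ∃ i ∈ s, 1 < f i
  · obtain ⟨i, hi, hfi⟩ := h
    have hrest : ∏ j ∈ s.erase i, f j ≤ 1 :=
      prod_le_one (fun j hj => h0 j (mem_of_mem_erase hj)) fun j hj =>
        not_lt.1 fun hfj => ne_of_mem_erase hj (hs ⟨mem_of_mem_erase hj, hfj⟩ ⟨hi, hfi⟩)
    calc ∏ j ∈ s, f j = f i * ∏ j ∈ s.erase i, f j := (mul_prod_erase s f hi).symm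
      _ ≤ c * 1 := mul_le_mul (hc i hi) hrest (prod_nonneg fun j hj => h0 j (mem_of_mem_erase hj))
          (zero_le_one.trans h1c)
      _ = c := mul_one c
  · push Not at h
    exact (prod_le_one h0 h).trans h1c

lemma lt_abs_div_pow_mul {a b x : ℝ} {m : ℕ} (ha : 0 < a) (hax : a < |x|) (hxb : |x| < b)
    (hm : m ≠ 0) : b < |(b / a) ^ m * x| := by
  have hr : 1 < b / a := (one_lt_div ha).2 (hax.trans hxb)
  have hr0 : 0 < b / a := zero_lt_one.trans hr
  calc b = b / a * a := (div_mul_cancel₀ b ha.ne').symm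
    _ < b / a * |x| := mul_lt_mul_of_pos_left hax hr0
    _ ≤ (b / a) ^ m * |x| := by gcongr; exact le_self_pow₀ hr.le hm
    _ = |(b / a) ^ m * x| := by rw [abs_mul, abs_of_pos (pow_pos hr0 m)]

lemma eq_of_mem_band_div_pow_mul {a b y : ℝ} {p q : ℕ} (ha : 0 < a)
    (hp : a < |(b / a) ^ p * y| ∧ |(b / a) ^ p * y| < b)
    (hq : a < |(b / a) ^ q * y| ∧ |(b / a) ^ q * y| < b) : p = q := by
  wlog hpq : p ≤ q generalizing p q
  · exact (this hq hp (by omega)).symm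
  by_contra hne
  have hlt := lt_abs_div_pow_mul (m := q - p) ha hp.1 hp.2 (by omega)
  rw [← mul_assoc, ← pow_add, Nat.sub_add_cancel hpq] at hlt
  exact hlt.not_gt hq.2

theorem non_overlapping_peaks_general (T : ℝ → ℝ) (hT : ∀ ω, 0 ≤ T ω)
    (ε ωlo ωhi γ₁ : ℝ) (hε : 0 < ε) (hlo : 0 < ωlo)
    (hpeak : ∀ ω : ℝ, ωlo < |ω| → |ω| < ωhi → T ω ≤ 1 + ε)
    (hflat : ∀ ω : ℝ, ¬(ωlo < |ω| ∧ |ω| < ωhi) → T ω ≤ 1) :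
    ∀ n : ℕ, ∀ ω : ℝ,
      ∏ k ∈ Finset.Icc 1 n, T ((ωhi / ωlo) ^ (k - 1) * γ₁ * ω) ≤ 1 + ε := by
  intro n ω
  have hbound : ∀ x, T x ≤ 1 + ε := fun x =>
    if h : ωlo < |x| ∧ |x| < ωhi then hpeak x h.1 h.2 else (hflat x h).trans (by linarith)
  have hband : ∀ x, 1 < T x → ωlo < |x| ∧ |x| < ωhi := fun x hx =>
    by_contra fun h => (hflat x h).not_gt hx
  refine prod_le_of_forall_le_of_subsingleton_one_lt (fun k _ => hT _) (fun k _ => hbound _)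
    (by linarith) ?_
  rintro i ⟨hi, hTi⟩ j ⟨hj, hTj⟩
  rw [mul_assoc] at hTi hTj
  have := eq_of_mem_band_div_pow_mul hlo (hband _ hTi) (hband _ hTj)
  rw [mem_Icc] at hi hj
  omega

theorem non_overlapping_peaks (T : ℝ → ℝ) (hT : ∀ ω, 0 ≤ T ω)
    (ε ωlo ωhi γ₁ : ℝ) (hε : 0 < ε) (hlo : 0 < ωlo) (hlohi : ωlo < ωhi) (hγ₁ : 0 < γ₁)
    (hpeak : ∀ ω : ℝ, ωlo < |ω| → |ω| < ωhi → T ω ≤ 1 + ε)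
    (hflat : ∀ ω : ℝ, ¬(ωlo < |ω| ∧ |ω| < ωhi) → T ω ≤ 1) :
    ∀ n : ℕ, ∀ ω : ℝ,
      ∏ k ∈ Finset.Icc 1 n, T ((ωhi / ωlo) ^ (k - 1) * γ₁ * ω) ≤ 1 + ε :=
  non_overlapping_peaks_general T hT ε ωlo ωhi γ₁ hε hlo hpeak hflat
end
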